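/- For every real λ > 1, ∫₀¹ ((1−u)/u)·ln(λ/(λ−u)) du = Li₂(1/λ) − (λ−1)·ln(1 − 1/λ) − 1. -/

import Mathlib

open MeasureTheory Real Set Filter

noncomputable def Li2 (x : ℝ) : ℝ := ∑' n : ℕ, x ^ (n + 1) / ((n : ℝ) + 1) ^ 2

/-!
With `x = 1/λ` we have `log (λ / (λ - u)) = -log (1 - x u)`, so the integrand splits as
`-log (1 - x u) / u + log (1 - x u)`. Expanding `-log (1 - x u) / u = ∑ xⁿ⁺¹ uⁿ / (n + 1)`
and integrating termwise (the integrals of the absolute values form a summable series) gives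
`Li₂ x`; the second piece has the elementary antiderivative `(u - 1/x) log (1 - x u) - u`.
-/

lemma abs_log_one_sub_le {y : ℝ} (hy : |y| < 1) : |log (1 - y)| ≤ |y| / (1 - |y|) := by
  simpa using Real.abs_log_sub_add_sum_range_le hy 0

lemma one_sub_mul_pos {x u : ℝ} (hx : x < 1) (hu : u ∈ Icc (0 : ℝ) 1) : 0 < 1 - x * u := by
  obtain ⟨hu0, hu1⟩ := hu
  rcases le_or_gt x 0 with h | h <;> nlinarith

lemma intervalIntegrable_neg_log_one_sub_mul_div {x : ℝ} (hx : |x| < 1) :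
    IntervalIntegrable (fun u ↦ -log (1 - x * u) / u) volume 0 1 := by
  rw [intervalIntegrable_iff_integrableOn_Ioc_of_le zero_le_one]
  have hcont : ContinuousOn (fun u ↦ -log (1 - x * u) / u) (Ioc 0 1) := by
    refine ((ContinuousOn.log (by fun_prop) fun u hu ↦ ?_).neg).div continuousOn_id
      fun u hu ↦ hu.1.ne'
    exact (one_sub_mul_pos (lt_of_abs_lt hx) (Ioc_subset_Icc_self hu)).ne'
  refine Integrable.mono' (integrableOn_const (C := |x| / (1 - |x|)) measure_Ioc_lt_top.ne)
    (hcont.aestronglyMeasurable measurableSet_Ioc) ?_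
  filter_upwards [ae_restrict_mem measurableSet_Ioc] with u ⟨hu0, hu1⟩
  have hxu : |x * u| ≤ |x| := by
    rw [abs_mul, abs_of_pos hu0]; exact mul_le_of_le_one_right (abs_nonneg x) hu1
  calc ‖-log (1 - x * u) / u‖ = |log (1 - x * u)| / u := by
        rw [norm_div, norm_neg, norm_eq_abs, norm_eq_abs, abs_of_pos hu0]
    _ ≤ |x * u| / (1 - |x * u|) / u :=
        div_le_div_of_nonneg_right (abs_log_one_sub_le (hxu.trans_lt hx)) hu0.le
    _ = |x| / (1 - |x * u|) := by
        rw [abs_mul, abs_of_pos hu0]; field_simp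
    _ ≤ |x| / (1 - |x|) := by
        gcongr

lemma integral_pow_succ_div_mul_pow (y : ℝ) (n : ℕ) :
    ∫ u in (0 : ℝ)..1, y ^ (n + 1) / ((n : ℝ) + 1) * u ^ n =
      y ^ (n + 1) / ((n : ℝ) + 1) ^ 2 := by
  rw [intervalIntegral.integral_const_mul, integral_pow]
  field_simp
  simp

lemma integral_neg_log_one_sub_mul_div {x : ℝ} (hx : |x| < 1) :
    ∫ u in (0 : ℝ)..1, -log (1 - x * u) / u = Li2 x := by
  set F : ℕ → ℝ → ℝ := fun n u ↦ x ^ (n + 1) / ((n : ℝ) + 1) * u ^ n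
  have hF_int (n : ℕ) : IntegrableOn (F n) (Ioc 0 1) :=
    (by fun_prop : Continuous (F n)).integrableOn_Ioc
  have hF_norm (n : ℕ) :
      ∫ u in Ioc (0 : ℝ) 1, ‖F n u‖ = |x| ^ (n + 1) / ((n : ℝ) + 1) ^ 2 := by
    rw [← integral_pow_succ_div_mul_pow, intervalIntegral.integral_of_le zero_le_one]
    refine setIntegral_congr_fun measurableSet_Ioc fun u hu ↦ ?_
    have : |(n : ℝ) + 1| = n + 1 := abs_of_pos (by positivity)
    simp [F, abs_of_pos hu.1, this]
  have hF_sum : Summable fun n ↦ ∫ u in Ioc (0 : ℝ) 1, ‖F n u‖ := by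
    simp_rw [hF_norm]
    refine ((summable_geometric_of_lt_one (abs_nonneg x) hx).mul_left |x|).of_nonneg_of_le
      (fun n ↦ by positivity) fun n ↦ ?_
    rw [← pow_succ']
    exact div_le_self (by positivity) (one_le_pow₀ (by linarith [n.cast_nonneg (α := ℝ)]))
  have hF_hasSum : ∀ u ∈ Ioc (0 : ℝ) 1, HasSum (F · u) (-log (1 - x * u) / u) := by
    intro u ⟨hu0, hu1⟩
    have hxu : |x * u| < 1 := by
      rw [abs_mul, abs_of_pos hu0]; exact (mul_le_of_le_one_right (abs_nonneg x) hu1).trans_lt hx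
    have hterm : (fun n : ℕ ↦ (x * u) ^ (n + 1) / (n + 1) / u) = (F · u) := by
      funext n
      simp only [F]
      field_simp
      ring
    simpa only [hterm] using (hasSum_pow_div_log_of_abs_lt_one hxu).div_const u
  rw [intervalIntegral.integral_of_le zero_le_one,
    setIntegral_congr_fun measurableSet_Ioc fun u hu ↦ (hF_hasSum u hu).tsum_eq.symm,
    ← integral_tsum_of_summable_integral_norm hF_int hF_sum, Li2]
  exact tsum_congr fun n ↦ by
    rw [← integral_pow_succ_div_mul_pow, intervalIntegral.integral_of_le zero_le_one]

lemma continuousOn_log_one_sub_mul {x : ℝ} (hx : x < 1) :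
    ContinuousOn (fun u ↦ log (1 - x * u)) (Icc 0 1) :=
  ContinuousOn.log (by fun_prop) fun u hu ↦ (one_sub_mul_pos hx hu).ne'

lemma integral_log_one_sub_mul {x : ℝ} (hx0 : x ≠ 0) (hx1 : x < 1) :
    ∫ u in (0 : ℝ)..1, log (1 - x * u) = (1 - x⁻¹) * log (1 - x) - 1 := by
  have hderiv : ∀ u ∈ uIcc (0 : ℝ) 1,
      HasDerivAt (fun u ↦ (u - x⁻¹) * log (1 - x * u) - u) (log (1 - x * u)) u := by
    intro u hu
    rw [uIcc_of_le zero_le_one] at hu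
    have hpos := one_sub_mul_pos hx1 hu
    have hlog := (((hasDerivAt_id u).const_mul x).const_sub 1).log hpos.ne'
    refine ((((hasDerivAt_id u).sub_const x⁻¹).mul hlog).sub (hasDerivAt_id u)).congr_deriv ?_
    simp only [id]
    field_simp
    ring
  rw [intervalIntegral.integral_eq_sub_of_hasDerivAt hderiv
    ((continuousOn_log_one_sub_mul hx1).intervalIntegrable_of_Icc zero_le_one)]
  simp

lemma log_div_sub_eq_neg_log_one_sub_inv_mul {lam : ℝ} (hlam : lam ≠ 0) (u : ℝ) :
    log (lam / (lam - u)) = -log (1 - lam⁻¹ * u) := by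
  rw [← log_inv]
  congr 1
  field_simp

theorem statement14 (lam : ℝ) (hlam : 1 < lam) :
    (∫ u in (0 : ℝ)..1, ((1 - u) / u) * Real.log (lam / (lam - u))) =
      Li2 (1 / lam) - (lam - 1) * Real.log (1 - 1 / lam) - 1 := by
  have hlam0 : lam ≠ 0 := by positivity
  have hx : |lam⁻¹| < 1 := by
    rw [abs_of_pos (by positivity)]; exact inv_lt_one_of_one_lt₀ hlam
  have hsplit : (fun u ↦ ((1 - u) / u) * log (lam / (lam - u))) =
      fun u ↦ -log (1 - lam⁻¹ * u) / u + log (1 - lam⁻¹ * u) := by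
    funext u
    rw [log_div_sub_eq_neg_log_one_sub_inv_mul hlam0]
    rcases eq_or_ne u 0 with rfl | hu
    · -- both sides vanish at `u = 0` because `1 / 0 = 0`
      simp
    · field_simp
      ring
  rw [hsplit, intervalIntegral.integral_add (intervalIntegrable_neg_log_one_sub_mul_div hx)
    ((continuousOn_log_one_sub_mul (lt_of_abs_lt hx)).intervalIntegrable_of_Icc zero_le_one),
    integral_neg_log_one_sub_mul_div hx, integral_log_one_sub_mul (inv_ne_zero hlam0)
    (lt_of_abs_lt hx), inv_inv, one_div]
  ring
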